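/- arXiv:2504.05661 — 2 statements merged into one kernel-verified Lean document; each statement's English description precedes it below -/
import Mathlib

section
/- Let b(x) = log(1 + exp(x)). Then for all real η₁, η₂, the ratio b''(η₁)/b''(η₂) is at most exp(3|η₁ − η₂|), where b''(η) = e^η/(1+e^η)². -/
/-!
Writing `e^η / (1 + e^η)^2 = 1 / (4 cosh² (η/2))`, the ratio becomes `cosh² (η₂/2) / cosh² (η₁/2)`.
The addition formula together with `|sinh x| ≤ cosh x` gives `cosh (x + d) ≤ cosh x · e^|d|`,
so the ratio is in fact at most `e^|η₁ - η₂|`.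
-/

open Real

namespace Real

theorem abs_sinh_le_cosh (x : ℝ) : |sinh x| ≤ cosh x := by
  rw [abs_sinh, ← cosh_abs x]
  exact (sinh_lt_cosh _).le

theorem cosh_le_cosh_mul_exp_abs_sub (x y : ℝ) : cosh y ≤ cosh x * exp |y - x| := by
  have hsinh : sinh x * sinh (y - x) ≤ cosh x * |sinh (y - x)| := by
    calc sinh x * sinh (y - x) ≤ |sinh x| * |sinh (y - x)| := by
          rw [← abs_mul]; exact le_abs_self _
      _ ≤ cosh x * |sinh (y - x)| := by gcongr; exact abs_sinh_le_cosh x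
  calc cosh y = cosh x * cosh (y - x) + sinh x * sinh (y - x) := by
        rw [← cosh_add, add_sub_cancel]
    _ ≤ cosh x * (cosh |y - x| + sinh |y - x|) := by
        rw [cosh_abs, ← abs_sinh]; linarith
    _ = cosh x * exp |y - x| := by rw [cosh_add_sinh]

theorem exp_div_one_add_exp_sq (η : ℝ) : exp η / (1 + exp η) ^ 2 = (4 * cosh (η / 2) ^ 2)⁻¹ := by
  have hη : exp η = exp (η / 2) ^ 2 := by rw [← exp_nat_mul]; ring_nf
  have hneg : exp (-(η / 2)) = (exp (η / 2))⁻¹ := exp_neg _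
  rw [cosh_eq, hneg, hη]
  have : 0 < exp (η / 2) := exp_pos _
  field_simp
  ring

theorem exp_div_one_add_exp_sq_div_le (η₁ η₂ : ℝ) :
    (exp η₁ / (1 + exp η₁) ^ 2) / (exp η₂ / (1 + exp η₂) ^ 2) ≤ exp |η₁ - η₂| := by
  have hcosh : cosh (η₂ / 2) ≤ cosh (η₁ / 2) * exp (|η₁ - η₂| / 2) := by
    have := cosh_le_cosh_mul_exp_abs_sub (η₁ / 2) (η₂ / 2)
    rwa [← sub_div, abs_div, abs_two, abs_sub_comm] at this
  have hexp : exp |η₁ - η₂| = exp (|η₁ - η₂| / 2) ^ 2 := by rw [← exp_nat_mul]; ring_nf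
  rw [exp_div_one_add_exp_sq, exp_div_one_add_exp_sq, inv_div_inv, hexp,
    div_le_iff₀ (by positivity)]
  calc 4 * cosh (η₂ / 2) ^ 2 ≤ 4 * (cosh (η₁ / 2) * exp (|η₁ - η₂| / 2)) ^ 2 := by
        gcongr
    _ = exp (|η₁ - η₂| / 2) ^ 2 * (4 * cosh (η₁ / 2) ^ 2) := by ring

end Real

/-- For the logistic cumulant `b x = log (1 + exp x)`, whose second derivative is
`b'' η = exp η / (1 + exp η)^2`, the ratio `b'' η₁ / b'' η₂` is at most `exp (3 |η₁ - η₂|)`. -/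
theorem logistic_second_deriv_ratio (η₁ η₂ : ℝ) :
    (Real.exp η₁ / (1 + Real.exp η₁) ^ 2) / (Real.exp η₂ / (1 + Real.exp η₂) ^ 2)
      ≤ Real.exp (3 * |η₁ - η₂|) :=
  (exp_div_one_add_exp_sq_div_le η₁ η₂).trans
    (exp_le_exp.mpr (le_mul_of_one_le_left (abs_nonneg _) (by norm_num)))
end

section
/- Under the assumptions of the previous Fisher-smoothness result, for every u ∈ ℝ^p and θ' with ‖F^{1/2}(θ'−θ)‖₂ ≤ r, one has (1 − τ₃r)‖F^{1/2}u‖₂² ≤ ⟨(−∇²f(θ'))u, u⟩ ≤ (1 + τ₃r)‖F^{1/2}u‖₂². -/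
/-!
Along the segment `θ + t (θ' - θ)`, the derivative of `t ↦ ∇²f(θ + t (θ' - θ))[u, u]` is the
mixed third derivative `∇³f[θ' - θ, u, u]`, so the theorem follows from the mean value theorem
once the third-order bound on the diagonal `∇³f[z, z, z]` is upgraded to the mixed bound
`|∇³f[v, u, u]| ≤ τ₃ ‖F^{1/2}u‖² ‖F^{1/2}v‖` with the same constant. This upgrade only concerns a
symmetric trilinear form restricted to the plane spanned by `u` and `v`, where it becomes a
statement about binary cubics: if `P(c, s) = A c³ + 3B c² s + 3C c s² + D s³` is bounded by `τ` on
the unit circle, then so is the linear form `a A + b B`. Writing `a + i b = ζ³` with `|ζ| = 1`,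
the value `a A + b B` is a convex combination of the values of `P` at the three cube roots
`ζ, ωζ, ω²ζ`.
-/

open Matrix

/-- The Hessian matrix of `f : ℝ^p → ℝ` at `x`. -/
noncomputable def hessMat {p : ℕ} (f : (Fin p → ℝ) → ℝ) (x : Fin p → ℝ) :
    Matrix (Fin p) (Fin p) ℝ :=
  Matrix.of fun i j => iteratedFDeriv ℝ 2 f x ![Pi.single i 1, Pi.single j 1]

/-- The trilinear action `⟨∇³f(x), z ⊗ z ⊗ z⟩` of the third derivative of `f` at `x`. -/
noncomputable def d3 {p : ℕ} (f : (Fin p → ℝ) → ℝ) (x z : Fin p → ℝ) : ℝ :=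
  iteratedFDeriv ℝ 3 f x ![z, z, z]

open Set Finset

section BinaryCubic

def binaryCubic (A B C D : ℝ) (z : ℂ) : ℝ :=
  z.re ^ 3 * A + 3 * z.re ^ 2 * z.im * B + 3 * z.re * z.im ^ 2 * C + z.im ^ 3 * D

/-- The weight `((1 + 2 cos 2φ) / 3)²` at `z = e^{iφ}`. -/
noncomputable def cubeRootWeight (z : ℂ) : ℝ := ((1 + 2 * (z.re ^ 2 - z.im ^ 2)) / 3) ^ 2

noncomputable def ω₃ : ℂ := ⟨-1 / 2, √3 / 2⟩

lemma norm_ω₃ : ‖ω₃‖ = 1 := by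
  rw [Complex.norm_eq_sqrt_sq_add_sq, Real.sqrt_eq_one]
  norm_num [ω₃, div_pow]

lemma ω₃_mul (z : ℂ) : ω₃ * z = ⟨(-z.re - √3 * z.im) / 2, (√3 * z.re - z.im) / 2⟩ := by
  apply Complex.ext <;> simp [ω₃] <;> ring

lemma ω₃_sq_mul (z : ℂ) : ω₃ ^ 2 * z = ⟨(-z.re + √3 * z.im) / 2, (-√3 * z.re - z.im) / 2⟩ := by
  have h3 : √3 * √3 = 3 := Real.mul_self_sqrt (by norm_num)
  apply Complex.ext <;> simp [ω₃, sq]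
  · linear_combination (-z.re / 4) * h3
  · linear_combination (-z.im / 4) * h3

lemma re_sq_add_im_sq_of_norm_eq_one {z : ℂ} (hz : ‖z‖ = 1) : z.re ^ 2 + z.im ^ 2 = 1 := by
  rwa [Complex.norm_eq_sqrt_sq_add_sq, Real.sqrt_eq_one] at hz

lemma sum_cubeRootWeight {z : ℂ} (hz : ‖z‖ = 1) :
    ∑ k ∈ range 3, cubeRootWeight (ω₃ ^ k * z) = 1 := by
  have h3 : √3 ^ 2 = 3 := Real.sq_sqrt (by norm_num)
  have hz' := re_sq_add_im_sq_of_norm_eq_one hz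
  simp only [sum_range_succ, range_zero, sum_empty, pow_zero, one_mul, pow_one, zero_add, ω₃_mul,
    ω₃_sq_mul, cubeRootWeight]
  grind

lemma sum_cubeRootWeight_mul_binaryCubic (A B C D : ℝ) {z : ℂ} (hz : ‖z‖ = 1) :
    ∑ k ∈ range 3, cubeRootWeight (ω₃ ^ k * z) * binaryCubic A B C D (ω₃ ^ k * z) =
      (z ^ 3).re * A + (z ^ 3).im * B := by
  have h3 : √3 ^ 2 = 3 := Real.sq_sqrt (by norm_num)
  have hz' := re_sq_add_im_sq_of_norm_eq_one hz
  have hre : (z ^ 3).re = z.re ^ 3 - 3 * z.re * z.im ^ 2 := by simp [pow_succ]; ring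
  have him : (z ^ 3).im = 3 * z.re ^ 2 * z.im - z.im ^ 3 := by simp [pow_succ]; ring
  simp only [sum_range_succ, range_zero, sum_empty, pow_zero, one_mul, pow_one, zero_add, ω₃_mul,
    ω₃_sq_mul, cubeRootWeight, binaryCubic, hre, him]
  grind

variable {A B C D τ : ℝ}

lemma abs_re_mul_add_im_mul_le_of_norm_eq_one
    (h : ∀ z : ℂ, ‖z‖ = 1 → |binaryCubic A B C D z| ≤ τ) {ζ : ℂ} (hζ : ‖ζ‖ = 1) :
    |ζ.re * A + ζ.im * B| ≤ τ := by
  obtain ⟨z, rfl⟩ := IsAlgClosed.exists_pow_nat_eq ζ three_pos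
  have hz : ‖z‖ = 1 := by
    rwa [norm_pow, pow_eq_one_iff_of_nonneg (norm_nonneg _) three_ne_zero] at hζ
  have hrot (k : ℕ) : ‖ω₃ ^ k * z‖ = 1 := by simp [norm_ω₃, hz]
  rw [← sum_cubeRootWeight_mul_binaryCubic A B C D hz]
  calc |∑ k ∈ range 3, cubeRootWeight (ω₃ ^ k * z) * binaryCubic A B C D (ω₃ ^ k * z)|
      ≤ ∑ k ∈ range 3, cubeRootWeight (ω₃ ^ k * z) * |binaryCubic A B C D (ω₃ ^ k * z)| := by
        refine (abs_sum_le_sum_abs _ _).trans_eq (sum_congr rfl fun k _ => ?_)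
        rw [abs_mul, abs_of_nonneg (sq_nonneg _)]
    _ ≤ ∑ k ∈ range 3, cubeRootWeight (ω₃ ^ k * z) * τ :=
        sum_le_sum fun k _ => mul_le_mul_of_nonneg_left (h _ (hrot k)) (sq_nonneg _)
    _ = τ := by rw [← sum_mul, sum_cubeRootWeight hz, one_mul]

lemma abs_re_mul_add_im_mul_le (h : ∀ z : ℂ, ‖z‖ = 1 → |binaryCubic A B C D z| ≤ τ) (ζ : ℂ) :
    |ζ.re * A + ζ.im * B| ≤ τ * ‖ζ‖ := by
  rcases eq_or_ne ζ 0 with rfl | hζ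
  · simp
  have hn : 0 < ‖ζ‖ := norm_pos_iff.2 hζ
  have := abs_re_mul_add_im_mul_le_of_norm_eq_one h (ζ := ζ / ‖ζ‖) (by simp [hn.ne'])
  rwa [Complex.div_ofReal_re, Complex.div_ofReal_im, div_mul_eq_mul_div, div_mul_eq_mul_div,
    ← add_div, abs_div, abs_of_pos hn, div_le_iff₀ hn] at this

end BinaryCubic

section SymmetricTrilinear

variable {E F : Type*} [NormedAddCommGroup E] [NormedSpace ℝ E] [NormedAddCommGroup F]
  [NormedSpace ℝ F]

def IsSymmTrilinear (m : E →L[ℝ] E →L[ℝ] E →L[ℝ] F) : Prop :=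
  (∀ a b c, m a b c = m b a c) ∧ ∀ a b c, m a b c = m a c b

variable {B : LinearMap.BilinForm ℝ E} {m : E →L[ℝ] E →L[ℝ] E →L[ℝ] ℝ} {τ : ℝ}

lemma IsSymmTrilinear.apply_re_smul_add_im_smul (hm : IsSymmTrilinear m) (e₁ e₂ : E) (z : ℂ) :
    m (z.re • e₁ + z.im • e₂) (z.re • e₁ + z.im • e₂) (z.re • e₁ + z.im • e₂) =
      binaryCubic (m e₁ e₁ e₁) (m e₁ e₁ e₂) (m e₁ e₂ e₂) (m e₂ e₂ e₂) z := by
  obtain ⟨h₁₂, h₂₃⟩ := hm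
  simp only [map_add, map_smul, _root_.add_apply, FunLike.coe_smul, Pi.smul_apply, smul_eq_mul,
    binaryCubic]
  rw [h₁₂ e₂ e₁ e₁, h₂₃ e₁ e₂ e₁, h₂₃ e₂ e₂ e₁, h₁₂ e₂ e₁ e₂]
  ring

lemma IsSymmTrilinear.abs_apply_le_of_orthogonal (hm : IsSymmTrilinear m) (hB : B.IsSymm)
    (hdiag : ∀ z, |m z z z| ≤ τ * √(B z z) ^ 3) {e₁ e₂ : E} (he₁ : B e₁ e₁ = 1)
    (he₂ : B e₂ e₂ ≤ 1) (he₁₂ : B e₁ e₂ = 0) (α β : ℝ) :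
    |m (α • e₁ + β • e₂) e₁ e₁| ≤ τ * √(α ^ 2 + β ^ 2) := by
  have hτ : 0 ≤ τ := by simpa [he₁] using (abs_nonneg _).trans (hdiag e₁)
  have hcubic (z : ℂ) (hz : ‖z‖ = 1) :
      |binaryCubic (m e₁ e₁ e₁) (m e₁ e₁ e₂) (m e₁ e₂ e₂) (m e₂ e₂ e₂) z| ≤ τ := by
    have hBz : B (z.re • e₁ + z.im • e₂) (z.re • e₁ + z.im • e₂) ≤ 1 := by
      simp only [map_add, map_smul, LinearMap.add_apply, LinearMap.smul_apply, smul_eq_mul, he₁,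
        he₁₂, hB.eq e₂ e₁]
      nlinarith [sq_nonneg z.im, re_sq_add_im_sq_of_norm_eq_one hz]
    rw [← hm.apply_re_smul_add_im_smul]
    calc _ ≤ τ * √(B (z.re • e₁ + z.im • e₂) (z.re • e₁ + z.im • e₂)) ^ 3 := hdiag _
      _ ≤ τ * 1 := by gcongr; exact pow_le_one₀ (Real.sqrt_nonneg _) (Real.sqrt_le_one.2 hBz)
      _ = τ := mul_one τ
  have hswap : m e₂ e₁ e₁ = m e₁ e₁ e₂ := by rw [hm.1, hm.2]
  simpa [hswap, Complex.norm_eq_sqrt_sq_add_sq] using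
    abs_re_mul_add_im_mul_le hcubic ⟨α, β⟩

lemma apply_self_nonneg (hB_pos : ∀ x, x ≠ 0 → 0 < B x x) (x : E) : 0 ≤ B x x := by
  rcases eq_or_ne x 0 with rfl | hx
  · simp
  · exact (hB_pos x hx).le

lemma sqrt_apply_self_smul_inv_smul (hB_pos : ∀ x, x ≠ 0 → 0 < B x x) (x : E) :
    √(B x x) • (√(B x x))⁻¹ • x = x := by
  rcases eq_or_ne x 0 with rfl | hx
  · simp
  · exact smul_inv_smul₀ (Real.sqrt_pos.2 (hB_pos x hx)).ne' x

lemma apply_inv_sqrt_smul_self (hB_pos : ∀ x, x ≠ 0 → 0 < B x x) {x : E} (hx : x ≠ 0) :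
    B ((√(B x x))⁻¹ • x) ((√(B x x))⁻¹ • x) = 1 := by
  have hpos := hB_pos x hx
  simp only [map_smul, LinearMap.smul_apply, smul_eq_mul, ← mul_assoc, ← sq, inv_pow,
    Real.sq_sqrt hpos.le]
  exact inv_mul_cancel₀ hpos.ne'

/-- Gram–Schmidt on `u, v` reduces this to `abs_apply_le_of_orthogonal`. -/
lemma IsSymmTrilinear.abs_apply_le (hm : IsSymmTrilinear m) (hB : B.IsSymm)
    (hB_pos : ∀ x, x ≠ 0 → 0 < B x x) (hdiag : ∀ z, |m z z z| ≤ τ * √(B z z) ^ 3) (u v : E) :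
    |m v u u| ≤ τ * B u u * √(B v v) := by
  rcases eq_or_ne u 0 with rfl | hu
  · simp
  set N := √(B u u)
  set e₁ := N⁻¹ • u
  have he₁ : B e₁ e₁ = 1 := apply_inv_sqrt_smul_self hB_pos hu
  set α := B e₁ v
  set w := v - α • e₁
  have hw : B e₁ w = 0 := by simp [w, he₁, α]
  set β := √(B w w)
  set e₂ := β⁻¹ • w
  have he₂ : B e₂ e₂ ≤ 1 := by
    rcases eq_or_ne w 0 with h | h
    · simp [e₂, h]
    · exact (apply_inv_sqrt_smul_self hB_pos h).le
  have he₁₂ : B e₁ e₂ = 0 := by simp [e₂, hw]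
  have hv : v = α • e₁ + β • e₂ := by
    rw [sqrt_apply_self_smul_inv_smul hB_pos w]
    simp [w]
  have hBv : B v v = α ^ 2 + β ^ 2 := by
    rw [show v = α • e₁ + w by simp [w]]
    simp only [map_add, map_smul, LinearMap.add_apply, LinearMap.smul_apply, smul_eq_mul, he₁, hw,
      hB.eq w e₁]
    rw [Real.sq_sqrt (apply_self_nonneg hB_pos w)]
    ring
  have hmu : m v u u = B u u * m v e₁ e₁ := by
    have hu_eq : u = N • e₁ := (sqrt_apply_self_smul_inv_smul hB_pos u).symm
    conv_lhs => rw [hu_eq]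
    simp only [map_smul, FunLike.coe_smul, Pi.smul_apply, smul_eq_mul, ← mul_assoc, ← sq]
    rw [Real.sq_sqrt (apply_self_nonneg hB_pos u)]
  rw [hmu, abs_mul, abs_of_nonneg (apply_self_nonneg hB_pos u), hBv, hv]
  calc B u u * |m (α • e₁ + β • e₂) e₁ e₁| ≤ B u u * (τ * √(α ^ 2 + β ^ 2)) :=
        mul_le_mul_of_nonneg_left (hm.abs_apply_le_of_orthogonal hB hdiag he₁ he₂ he₁₂ α β)
          (apply_self_nonneg hB_pos u)
    _ = τ * B u u * √(α ^ 2 + β ^ 2) := by ring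

lemma mul_apply_self_nonneg_of_abs_apply_le (hB_pos : ∀ x, x ≠ 0 → 0 < B x x)
    (hdiag : ∀ z, |m z z z| ≤ τ * √(B z z) ^ 3) (u : E) : 0 ≤ τ * B u u := by
  rcases eq_or_ne u 0 with rfl | hu
  · simp
  have hpos : 0 < √(B u u) ^ 3 := pow_pos (Real.sqrt_pos.2 (hB_pos u hu)) 3
  have hτ : 0 ≤ τ := nonneg_of_mul_nonneg_left ((abs_nonneg _).trans (hdiag u)) hpos
  exact mul_nonneg hτ (hB_pos u hu).le

end SymmetricTrilinear

section ThirdDerivative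

variable {E F : Type*} [NormedAddCommGroup E] [NormedSpace ℝ E] [NormedAddCommGroup F]
  [NormedSpace ℝ F] {f : E → F}

lemma iteratedFDeriv_three_apply (f : E → F) (x : E) (m : Fin 3 → E) :
    iteratedFDeriv ℝ 3 f x m = fderiv ℝ (fderiv ℝ (fderiv ℝ f)) x (m 0) (m 1) (m 2) := by
  rw [iteratedFDeriv_succ_apply_right, iteratedFDeriv_two_apply]
  rfl

lemma ContDiff.hasFDerivAt_fderiv_fderiv (hf : ContDiff ℝ 3 f) (x : E) :
    HasFDerivAt (fderiv ℝ (fderiv ℝ f)) (fderiv ℝ (fderiv ℝ (fderiv ℝ f)) x) x :=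
  ((hf.fderiv_right (m := 2) (by norm_num)).fderiv_right (m := 1) (by norm_num)).differentiable
    (by norm_num) x |>.hasFDerivAt

lemma ContDiff.isSymmTrilinear_fderiv_fderiv_fderiv (hf : ContDiff ℝ 3 f) (x : E) :
    IsSymmTrilinear (fderiv ℝ (fderiv ℝ (fderiv ℝ f)) x) := by
  refine ⟨fun a b c => ?_, fun a b c => ?_⟩
  · rw [(hf.fderiv_right (m := 2) (by norm_num)).contDiffAt.isSymmSndFDerivAt (by simp) a b]
  · have hev (b c : E) : HasFDerivAt (fun y => fderiv ℝ (fderiv ℝ f) y b c)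
        (((fderiv ℝ (fderiv ℝ (fderiv ℝ f)) x).flip b).flip c) x := by
      simpa using ((hf.hasFDerivAt_fderiv_fderiv x).clm_apply (hasFDerivAt_const b x)).clm_apply
        (hasFDerivAt_const c x)
    have hsymm : (fun y => fderiv ℝ (fderiv ℝ f) y b c) = fun y => fderiv ℝ (fderiv ℝ f) y c b :=
      funext fun y => hf.contDiffAt.isSymmSndFDerivAt (by simp; norm_num) b c
    exact congrArg (· a) ((hev b c).unique (hsymm ▸ hev c b))

lemma ContDiff.norm_fderiv_fderiv_sub_le (hf : ContDiff ℝ 3 f) {x v u : E} {C : ℝ}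
    (hC : ∀ t ∈ Icc (0 : ℝ) 1, ‖fderiv ℝ (fderiv ℝ (fderiv ℝ f)) (x + t • v) v u u‖ ≤ C) :
    ‖fderiv ℝ (fderiv ℝ f) (x + v) u u - fderiv ℝ (fderiv ℝ f) x u u‖ ≤ C := by
  have hderiv (t : ℝ) : HasDerivAt (fun t : ℝ => fderiv ℝ (fderiv ℝ f) (x + t • v) u u)
      (fderiv ℝ (fderiv ℝ (fderiv ℝ f)) (x + t • v) v u u) t := by
    have hpath : HasDerivAt (fun t : ℝ => x + t • v) v t := by
      simpa using ((hasDerivAt_id t).smul_const v).const_add x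
    have hD := (hf.hasFDerivAt_fderiv_fderiv (x + t • v)).comp_hasDerivAt
      (E := E →L[ℝ] E →L[ℝ] F) t hpath
    simpa using (hD.clm_apply (hasDerivAt_const t u)).clm_apply (hasDerivAt_const t u)
  simpa using norm_image_sub_le_of_norm_deriv_le_segment'
    (fun t _ => (hderiv t).hasDerivWithinAt) (fun t ht => hC t (Ico_subset_Icc_self ht)) 1
    (right_mem_Icc.2 zero_le_one)

end ThirdDerivative

lemma ContDiff.abs_fderiv_fderiv_sub_le {E : Type*} [NormedAddCommGroup E] [NormedSpace ℝ E]
    {f : E → ℝ} (hf : ContDiff ℝ 3 f) {B : LinearMap.BilinForm ℝ E} (hB : B.IsSymm)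
    (hB_pos : ∀ x, x ≠ 0 → 0 < B x x) {x v : E} {τ r : ℝ}
    (hdiag : ∀ w, √(B w w) ≤ r → ∀ z, |fderiv ℝ (fderiv ℝ (fderiv ℝ f)) (x + w) z z z| ≤
      τ * √(B z z) ^ 3)
    (hv : √(B v v) ≤ r) (u : E) :
    |fderiv ℝ (fderiv ℝ f) (x + v) u u - fderiv ℝ (fderiv ℝ f) x u u| ≤ τ * B u u * r := by
  have hτu : 0 ≤ τ * B u u := mul_apply_self_nonneg_of_abs_apply_le hB_pos
    (hdiag 0 (by simpa using (Real.sqrt_nonneg _).trans hv)) u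
  refine hf.norm_fderiv_fderiv_sub_le fun t ht => ?_
  have htv : √(B (t • v) (t • v)) ≤ r := by
    refine le_trans (Real.sqrt_le_sqrt ?_) hv
    have hX := apply_self_nonneg hB_pos v
    simp only [map_smul, LinearMap.smul_apply, smul_eq_mul]
    exact (mul_le_of_le_one_left (mul_nonneg ht.1 hX) ht.2).trans (mul_le_of_le_one_left hX ht.2)
  calc _ ≤ τ * B u u * √(B v v) :=
        (hf.isSymmTrilinear_fderiv_fderiv_fderiv _).abs_apply_le hB hB_pos (hdiag _ htv) u v
    _ ≤ τ * B u u * r := mul_le_mul_of_nonneg_left hv hτu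

lemma dotProduct_hessMat_mulVec {p : ℕ} (f : (Fin p → ℝ) → ℝ) (y u : Fin p → ℝ) :
    u ⬝ᵥ hessMat f y *ᵥ u = fderiv ℝ (fderiv ℝ f) y u u := by
  have : hessMat f y = LinearMap.toMatrix₂' ℝ (fderiv ℝ (fderiv ℝ f) y).toLinearMap₁₂ := by
    ext i j
    simp [hessMat, iteratedFDeriv_two_apply]
  rw [this, ← Matrix.toLinearMap₂'_apply', Matrix.toLinearMap₂'_toMatrix']
  rfl

/-- Under the Fisher-smoothness assumptions (`f` is `C⁴`, `F = -∇²f(θ)` positive definite,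
third-order smoothness with parameters `(τ₃, F, r)` at `θ`), for every `u ∈ ℝ^p` and every
`θ'` with `‖F^{1/2}(θ'-θ)‖₂ ≤ r`,
`(1 - τ₃ r) ‖F^{1/2}u‖₂² ≤ ⟨(-∇²f(θ'))u, u⟩ ≤ (1 + τ₃ r) ‖F^{1/2}u‖₂²`. -/
theorem fisher_quadratic_comparison {p : ℕ} (f : (Fin p → ℝ) → ℝ) (hf : ContDiff ℝ 4 f)
    (θ : Fin p → ℝ) (F : Matrix (Fin p) (Fin p) ℝ)
    (hFhess : F = -hessMat f θ) (hFpd : F.PosDef) (τ₃ r : ℝ)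
    (hsmooth : ∀ u z : Fin p → ℝ, Real.sqrt (u ⬝ᵥ F.mulVec u) ≤ r →
      |d3 f (θ + u) z| ≤ τ₃ * Real.sqrt (z ⬝ᵥ F.mulVec z) ^ 3)
    (u : Fin p → ℝ)
    (θ' : Fin p → ℝ) (hθ' : Real.sqrt ((θ' - θ) ⬝ᵥ F.mulVec (θ' - θ)) ≤ r) :
    (1 - τ₃ * r) * (u ⬝ᵥ F.mulVec u) ≤ u ⬝ᵥ (-hessMat f θ').mulVec u ∧
      u ⬝ᵥ (-hessMat f θ').mulVec u ≤ (1 + τ₃ * r) * (u ⬝ᵥ F.mulVec u) := by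
  set B := F.toBilin'
  have hBF (x y : Fin p → ℝ) : B x y = x ⬝ᵥ F *ᵥ y := Matrix.toBilin'_apply' F x y
  have hB : B.IsSymm := Matrix.isSymm_toBilin'_iff_isSymm.2 (by simpa using hFpd.isHermitian)
  have hB_pos (x : Fin p → ℝ) (hx : x ≠ 0) : 0 < B x x := by
    simpa [hBF] using hFpd.dotProduct_mulVec_pos hx
  have hf3 : ContDiff ℝ 3 f := hf.of_le (by norm_num)
  have hdiag (w : Fin p → ℝ) (hw : √(B w w) ≤ r) (z : Fin p → ℝ) :
      |fderiv ℝ (fderiv ℝ (fderiv ℝ f)) (θ + w) z z z| ≤ τ₃ * √(B z z) ^ 3 := by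
    simpa [d3, iteratedFDeriv_three_apply, hBF] using hsmooth w z (by simpa [hBF] using hw)
  have hvar := hf3.abs_fderiv_fderiv_sub_le hB hB_pos hdiag (v := θ' - θ)
    (by simpa [hBF] using hθ') u
  rw [add_sub_cancel, hBF, hFhess, neg_mulVec, dotProduct_neg, dotProduct_hessMat_mulVec] at hvar
  rw [hFhess, neg_mulVec, neg_mulVec, dotProduct_neg, dotProduct_neg, dotProduct_hessMat_mulVec,
    dotProduct_hessMat_mulVec]
  constructor <;> linarith [abs_le.1 hvar]
end
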